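/- Let y₁ < ... < yₙ be distinct reals, n > 4, and for 1 ≤ i ≤ n−1 let L(i) = Σ_{j=1}^{i}(yⱼ − μ₁(i))² + Σ_{j=i+1}^{n}(yⱼ − μ₂(i))², where μ₁(i) and μ₂(i) are the means of the first i and last n−i values. Then min over all 2-partitions (P₁, P₂) of {y₁,...,yₙ} into two nonempty parts of SS(P₁) + SS(P₂) equals min_{1 ≤ i ≤ n−1} L(i); i.e., the unconstrained optimal 2-partition is always contiguous in the sorted order of y. -/

import Mathlib

/-!
With `k = #P` and `S = ∑_{P} y`, the cost `SS P + SS Pᶜ` equals `∑ y² - f S`, where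
`f S = S² / k + (T - S)² / (n - k)` and `T = ∑ y`. For sorted `y`, the sum `S` over a part of size
`k` lies between the sum of the `k` smallest values and the sum of the `k` largest values, and
these two extremes are exactly the contiguous partitions cut at `k` and at `n - k`. Since `f` is
convex, it attains its maximum on that interval at an endpoint, so some contiguous partition costs
no more than `P`.
-/

open Finset

noncomputable def mu {n : ℕ} (y : Fin n → ℝ) (P : Finset (Fin n)) : ℝ :=
  (∑ j ∈ P, y j) / P.card

noncomputable def SS {n : ℕ} (y : Fin n → ℝ) (P : Finset (Fin n)) : ℝ :=
  ∑ j ∈ P, (y j - mu y P) ^ 2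

lemma convexOn_sq_div_add_sq_div {a b : ℝ} (ha : 0 ≤ a) (hb : 0 ≤ b) (T : ℝ) :
    ConvexOn ℝ Set.univ (fun S : ℝ => S ^ 2 / a + (T - S) ^ 2 / b) := by
  have hsq : ConvexOn ℝ Set.univ (fun S : ℝ => S ^ 2) := even_two.convexOn_pow
  have h₁ := hsq.smul (inv_nonneg.2 ha)
  have h₂ := (hsq.comp_affineMap (AffineMap.const ℝ ℝ T - AffineMap.id ℝ ℝ)).smul (inv_nonneg.2 hb)
  refine (h₁.add h₂).congr fun S _ => ?_
  simp [div_eq_inv_mul]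

lemma val_le_val_orderEmbedding_apply {k n : ℕ} (e : Fin k ↪o Fin n) (i : Fin k) :
    (i : ℕ) ≤ e i := by
  simpa using card_le_card (s := (Iio i).map e.toEmbedding) (t := Iio (e i)) (by
    intro x hx
    simp only [mem_map, mem_Iio] at hx ⊢
    obtain ⟨j, hj, rfl⟩ := hx
    exact e.strictMono hj)

variable {n : ℕ}

lemma SS_eq_sum_sq_sub (y : Fin n → ℝ) (P : Finset (Fin n)) :
    SS y P = ∑ j ∈ P, y j ^ 2 - (∑ j ∈ P, y j) ^ 2 / #P := by
  rcases P.eq_empty_or_nonempty with rfl | hP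
  · simp [SS]
  have hc : (#P : ℝ) ≠ 0 := by exact_mod_cast hP.card_ne_zero
  simp only [SS, mu, sub_sq, sum_add_distrib, sum_sub_distrib, ← sum_mul, ← mul_sum, sum_const,
    nsmul_eq_mul]
  field_simp
  ring

lemma SS_add_SS_compl (y : Fin n → ℝ) (P : Finset (Fin n)) :
    SS y P + SS y Pᶜ = ∑ j, y j ^ 2
      - ((∑ j ∈ P, y j) ^ 2 / #P + (∑ j, y j - ∑ j ∈ P, y j) ^ 2 / #Pᶜ) := by
  rw [SS_eq_sum_sq_sub, SS_eq_sum_sq_sub, ← sum_add_sum_compl P (fun j => y j ^ 2),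
    ← sum_add_sum_compl P y]
  ring

lemma compl_filter_val_lt (k : ℕ) :
    (univ.filter fun j : Fin n => (j : ℕ) < k)ᶜ = univ.filter fun j : Fin n => k ≤ (j : ℕ) := by
  ext j; simp

lemma filter_val_lt_eq_map {k : ℕ} (hk : k ≤ n) :
    univ.filter (fun j : Fin n => (j : ℕ) < k) = univ.map (Fin.castLEEmb hk) := by
  ext j
  simp only [mem_filter, mem_univ, true_and, mem_map, Fin.castLEEmb_apply]
  exact ⟨fun h => ⟨⟨j, h⟩, rfl⟩, by rintro ⟨i, rfl⟩; exact i.2⟩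

lemma card_filter_val_lt_card (P : Finset (Fin n)) :
    #(univ.filter fun j : Fin n => (j : ℕ) < #P) = #P := by
  simpa [Fin.card_filter_val_lt] using P.card_le_univ

lemma sum_filter_val_lt_card_le_sum {y : Fin n → ℝ} (hy : Monotone y) (P : Finset (Fin n)) :
    ∑ j ∈ univ.filter (fun j : Fin n => (j : ℕ) < #P), y j ≤ ∑ j ∈ P, y j := by
  conv_rhs => rw [← P.map_orderEmbOfFin_univ rfl]
  rw [filter_val_lt_eq_map (by simpa using P.card_le_univ), sum_map, sum_map]
  exact sum_le_sum fun i _ => hy (val_le_val_orderEmbedding_apply _ i)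

lemma exists_contiguous_split_le {y : Fin n → ℝ} (hy : Monotone y) (P : Finset (Fin n)) :
    ∃ i, (i = #P ∨ i = #Pᶜ) ∧
      SS y (univ.filter fun j : Fin n => (j : ℕ) < i)
        + SS y (univ.filter fun j : Fin n => i ≤ (j : ℕ)) ≤ SS y P + SS y Pᶜ := by
  set F := univ.filter fun j : Fin n => (j : ℕ) < #P
  set G := univ.filter fun j : Fin n => (j : ℕ) < #Pᶜ
  set f : ℝ → ℝ := fun S => S ^ 2 / #P + (∑ j, y j - S) ^ 2 / #Pᶜ
  have hFcard : #F = #P := card_filter_val_lt_card P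
  have hGcard : #G = #Pᶜ := card_filter_val_lt_card Pᶜ
  have hFccard : #Fᶜ = #Pᶜ := by rw [card_compl, card_compl, hFcard]
  have hGccard : #Gᶜ = #P := by
    rw [card_compl, hGcard, card_compl, Nat.sub_sub_self P.card_le_univ]
  have hP : SS y P + SS y Pᶜ = ∑ j, y j ^ 2 - f (∑ j ∈ P, y j) := SS_add_SS_compl y P
  have hF : SS y F + SS y Fᶜ = ∑ j, y j ^ 2 - f (∑ j ∈ F, y j) := by
    rw [SS_add_SS_compl, hFcard, hFccard]
  -- `Gᶜ` consists of the `#P` largest values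
  have hG : SS y G + SS y Gᶜ = ∑ j, y j ^ 2 - f (∑ j, y j - ∑ j ∈ G, y j) := by
    rw [SS_add_SS_compl, hGcard, hGccard]
    simp only [f, sub_sub_cancel]
    ring
  have hlow : ∑ j ∈ F, y j ≤ ∑ j ∈ P, y j := sum_filter_val_lt_card_le_sum hy P
  have hhigh : ∑ j ∈ P, y j ≤ ∑ j, y j - ∑ j ∈ G, y j := by
    have := sum_filter_val_lt_card_le_sum hy Pᶜ
    have := sum_add_sum_compl P y
    linarith
  have hmax := (convexOn_sq_div_add_sq_div (Nat.cast_nonneg #P) (Nat.cast_nonneg #Pᶜ)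
    (∑ j, y j)).le_max_of_mem_Icc trivial trivial ⟨hlow, hhigh⟩
  rcases le_max_iff.1 hmax with h | h
  · refine ⟨#P, Or.inl rfl, ?_⟩
    rw [← compl_filter_val_lt, hF, hP]
    linarith
  · refine ⟨#Pᶜ, Or.inr rfl, ?_⟩
    rw [← compl_filter_val_lt, hG, hP]
    linarith

theorem stmt_17_general (n : ℕ) (y : Fin n → ℝ) (hy : StrictMono y) :
    sInf {l : ℝ | ∃ P₁ P₂ : Finset (Fin n), P₁.Nonempty ∧ P₂.Nonempty ∧
        Disjoint P₁ P₂ ∧ P₁ ∪ P₂ = Finset.univ ∧ l = SS y P₁ + SS y P₂}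
      = sInf {l : ℝ | ∃ i : ℕ, 1 ≤ i ∧ i ≤ n - 1 ∧
        l = SS y (univ.filter (fun j : Fin n => (j : ℕ) < i))
            + SS y (univ.filter (fun j : Fin n => i ≤ (j : ℕ)))} := by
  refine csInf_eq_csInf_of_forall_exists_le ?_ ?_
  · rintro _ ⟨P, Q, hP, hQ, hd, hu, rfl⟩
    obtain rfl : Pᶜ = Q := (IsCompl.of_eq (disjoint_iff.1 hd) hu).compl_eq
    obtain ⟨i, hi, hle⟩ := exists_contiguous_split_le hy.monotone P
    have hcard := P.card_add_card_compl
    simp only [Fintype.card_fin] at hcard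
    have := hP.card_pos
    have := hQ.card_pos
    exact ⟨_, ⟨i, by omega, by omega, rfl⟩, hle⟩
  · rintro _ ⟨i, hi, hin, rfl⟩
    refine ⟨_, ⟨univ.filter fun j : Fin n => (j : ℕ) < i, univ.filter fun j : Fin n => i ≤ (j : ℕ),
      ⟨⟨0, by omega⟩, by simp only [mem_filter, mem_univ, true_and]; omega⟩,
      ⟨⟨i, by omega⟩, by simp⟩, ?_, ?_, rfl⟩, le_rfl⟩
    · rw [← compl_filter_val_lt]; exact disjoint_compl_right
    · rw [← compl_filter_val_lt]; exact union_compl _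

theorem stmt_17 (n : ℕ) (hn : 4 < n) (y : Fin n → ℝ) (hy : StrictMono y) :
    sInf {l : ℝ | ∃ P₁ P₂ : Finset (Fin n), P₁.Nonempty ∧ P₂.Nonempty ∧
        Disjoint P₁ P₂ ∧ P₁ ∪ P₂ = Finset.univ ∧ l = SS y P₁ + SS y P₂}
      = sInf {l : ℝ | ∃ i : ℕ, 1 ≤ i ∧ i ≤ n - 1 ∧
        l = SS y (univ.filter (fun j : Fin n => (j : ℕ) < i))
            + SS y (univ.filter (fun j : Fin n => i ≤ (j : ℕ)))} :=
  stmt_17_general n y hy
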